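/- For a manifold with boundary pattern M with nerve L, the orbifold Euler characteristic satisfies χ^orb(O(M)) = (−1)^n Σ_σ (−1/2)^{dim σ + 1} χ(S_σ), where the sum is over all simplices σ of L including the empty simplex (dim ∅ = −1, S_∅ = M). -/
import Mathlib


/-- For a manifold with complete boundary pattern of dimension n with nerve K
(a simplex σ for each nonempty intersection of facets, including the empty simplex for M),
strata i lying in the face S_{ν i} have codimension (ν i).card = dim(ν i) + 1, and
Poincaré duality gives χ(S,∂S) = (−1)^{dim S}χ(S); then
χ^orb(O(M)) = Σ_S (1/2)^{codim S} χ(S,∂S) = (−1)^n Σ_{σ∈K} (−1/2)^{dim σ + 1} χ(S_σ). -/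
theorem chiOrb_nerve_formula (V : Type*) [DecidableEq V] (n : ℕ)
    (ι : Type*) [Fintype ι]
    (K : Finset (Finset V)) (hempty : ∅ ∈ K)
    (ν : ι → Finset V) (hν : ∀ i, ν i ∈ K)
    (hdim : ∀ i, (ν i).card ≤ n)
    (chi : ι → ℤ) (relChi : ι → ℚ)
    (hPD : ∀ i, relChi i = (-1) ^ (n - (ν i).card) * (chi i : ℚ)) :
    ∑ i, (1 / 2 : ℚ) ^ ((ν i).card) * relChi i
      = (-1) ^ n * ∑ σ ∈ K, (-(1 / 2) : ℚ) ^ (σ.card) *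
          ∑ i ∈ Finset.univ.filter (fun i => ν i = σ), (chi i : ℚ) := by
  have key : ∀ i, (1 / 2 : ℚ) ^ ((ν i).card) * relChi i
      = (-1 : ℚ) ^ n * ((-(1 / 2) : ℚ) ^ ((ν i).card) * (chi i : ℚ)) := by
    intro i
    have h : (-1 : ℚ) ^ (n - (ν i).card) * (-1) ^ ((ν i).card) = (-1) ^ n := by
      rw [← pow_add, Nat.sub_add_cancel (hdim i)]
    have h2 : ((-(1 / 2) : ℚ)) ^ ((ν i).card)
        = (-1 : ℚ) ^ ((ν i).card) * (1 / 2) ^ ((ν i).card) := by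
      rw [← mul_pow]; norm_num
    have hone : (-1 : ℚ) ^ ((ν i).card) * (-1) ^ ((ν i).card) = 1 := by
      rw [← pow_add, ← two_mul, pow_mul]; norm_num
    rw [hPD i, h2]
    linear_combination ((1 / 2 : ℚ) ^ ((ν i).card) * (-1) ^ ((ν i).card) * (chi i : ℚ)) * h
      - ((1 / 2 : ℚ) ^ ((ν i).card) * (-1) ^ (n - (ν i).card) * (chi i : ℚ)) * hone
  calc ∑ i, (1 / 2 : ℚ) ^ ((ν i).card) * relChi i
      = ∑ i, (-1 : ℚ) ^ n * ((-(1 / 2) : ℚ) ^ ((ν i).card) * (chi i : ℚ)) :=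
        Finset.sum_congr rfl fun i _ => key i
    _ = (-1 : ℚ) ^ n * ∑ i, (-(1 / 2) : ℚ) ^ ((ν i).card) * (chi i : ℚ) := by
        rw [Finset.mul_sum]
    _ = _ := by
        congr 1
        rw [← Finset.sum_fiberwise_of_maps_to (fun i _ => hν i)]
        refine Finset.sum_congr rfl fun σ _ => ?_
        rw [Finset.mul_sum]
        refine Finset.sum_congr rfl fun i hi => ?_
        rw [(Finset.mem_filter.mp hi).2]
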